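/- Let ⟨G, h, g⟩ be a hat guessing game on a directed visibility graph G and let ⟨S, T⟩ be a partition of V(G) such that no directed edge goes from T to S (no sage in T sees any sage in S). Then ⟨G, h, g⟩ is winning if and only if at least one of the induced games ⟨G[S], h|_S, g|_S⟩ or ⟨G[T], h|_T, g|_T⟩ is winning. -/
import Mathlib


/-- Winning strategy for the hat game on a directed visibility graph: `E u v` means `u` sees `v`. -/
def DHatWinning {V : Type*} (E : V → V → Prop) (h g : V → ℕ) : Prop :=
  ∃ σ : V → (V → ℕ) → Finset ℕ,
    (∀ v c c', (∀ u, E v u → c u = c' u) → σ v c = σ v c') ∧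
    (∀ v c, (σ v c).card ≤ g v) ∧
    ∀ c : V → ℕ, (∀ v, c v < h v) → ∃ v, c v ∈ σ v c

/-- The directed hat game on the induced subgraph with vertex set `S`. -/
def DHatWinningOn {V : Type*} (E : V → V → Prop) (S : Set V) (h g : V → ℕ) : Prop :=
  ∃ σ : V → (V → ℕ) → Finset ℕ,
    (∀ v ∈ S, ∀ c c', (∀ u ∈ S, E v u → c u = c' u) → σ v c = σ v c') ∧
    (∀ v ∈ S, ∀ c, (σ v c).card ≤ g v) ∧
    ∀ c : V → ℕ, (∀ v ∈ S, c v < h v) → ∃ v ∈ S, c v ∈ σ v c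

lemma dhat_on_imp {V : Type*} (E : V → V → Prop) (h g : V → ℕ) (A : Set V)
    (hA : DHatWinningOn E A h g) : DHatWinning E h g := by
  classical
  obtain ⟨σ, hloc, hcard, hwin⟩ := hA
  refine ⟨fun v c => if v ∈ A then σ v c else ∅, ?_, ?_, ?_⟩
  · intro v c c' hcc
    by_cases hv : v ∈ A
    · simp only [hv, if_true]
      exact hloc v hv c c' fun u _ hu => hcc u hu
    · simp [hv]
  · intro v c
    by_cases hv : v ∈ A
    · simpa [hv] using hcard v hv c
    · simp [hv]
  · intro c hc
    obtain ⟨v, hv, hmem⟩ := hwin c fun v _ => hc v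
    exact ⟨v, by simpa [hv] using hmem⟩

/-- If `⟨S, T⟩` is a partition of the vertices of a directed graph such that
no sage in `T` sees any sage in `S`, then the game is winning iff one of the induced games
on `S` or `T` is winning. -/
theorem cut_winning_iff {V : Type*} (E : V → V → Prop) (h g : V → ℕ) (S T : Set V)
    (hcup : S ∪ T = Set.univ) (hdisj : Disjoint S T)
    (hcut : ∀ t ∈ T, ∀ s ∈ S, ¬ E t s) :
    DHatWinning E h g ↔ DHatWinningOn E S h g ∨ DHatWinningOn E T h g := by
  classical
  have memST : ∀ v : V, v ∈ S ∨ v ∈ T := fun v => by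
    have : v ∈ S ∪ T := hcup ▸ Set.mem_univ v
    exact this
  constructor
  · rintro ⟨σ, hloc, hcard, hwin⟩
    by_cases hT : DHatWinningOn E T h g
    · exact Or.inr hT
    left
    have hTloc : ∀ v ∈ T, ∀ c c', (∀ u ∈ T, E v u → c u = c' u) → σ v c = σ v c' := by
      intro v hv c c' hcc
      apply hloc
      intro u hu
      have huT : u ∈ T := by
        rcases memST u with h1 | h1
        · exact absurd hu (hcut v hv u h1)
        · exact h1
      exact hcc u huT hu
    have hbad : ∃ c0, (∀ v ∈ T, c0 v < h v) ∧ ∀ v ∈ T, c0 v ∉ σ v c0 := by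
      by_contra hb
      push_neg at hb
      exact hT ⟨σ, hTloc, fun v _ c => hcard v c, fun c hc => hb c hc⟩
    obtain ⟨c0, hc0, hc0bad⟩ := hbad
    refine ⟨fun v c => σ v (fun u => if u ∈ S then c u else c0 u), ?_, ?_, ?_⟩
    · intro v _ c c' hcc
      apply hloc
      intro u hu
      by_cases huS : u ∈ S
      · simp [huS, hcc u huS hu]
      · simp [huS]
    · intro v _ c; exact hcard v _
    · intro c hc
      set c' : V → ℕ := fun u => if u ∈ S then c u else c0 u with hc'
      have hall : ∀ v, c' v < h v := by
        intro v
        by_cases hvS : v ∈ S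
        · simpa [c', hvS] using hc v hvS
        · have hvT : v ∈ T := (memST v).resolve_left hvS
          simpa [c', hvS] using hc0 v hvT
      obtain ⟨v, hv⟩ := hwin c' hall
      have hvS : v ∈ S := by
        by_contra hvS
        have hvT : v ∈ T := (memST v).resolve_left hvS
        have heq : σ v c' = σ v c0 := hTloc v hvT _ _ (fun u hu _ => by
          simp [c', Set.disjoint_right.mp hdisj hu])
        rw [heq] at hv
        have hcv : c' v = c0 v := by simp [c', hvS]
        exact hc0bad v hvT (hcv ▸ hv)
      refine ⟨v, hvS, ?_⟩
      have hcv : c' v = c v := by simp [c', hvS]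
      rwa [hcv] at hv
  · rintro (hS | hT)
    · exact dhat_on_imp E h g S hS
    · exact dhat_on_imp E h g T hT
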